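/- arXiv:2008.04842 — 12 statements merged into one kernel-verified Lean document; each statement's English description precedes it below -/
import Mathlib

section
/- For all natural numbers n ≥ 3 and m ≥ 8, one has L_n^2 · f_{m-6} + 2 · L_n · f_n · f_{m-7} + f_n^2 · f_{m-8} = f_{n-2}^2 · f_m + 2 · f_{n-2} · f_{n-3} · f_{m-2} + f_{n-3}^2 · f_{m-4}. -/
/-- Shifted Fibonacci numbers: `f n = F (n+1)`, so `f 0 = f 1 = 1`. -/
def f (n : ℕ) : ℕ := Nat.fib (n + 1)

/-- Lucas numbers: `L 0 = 2`, `L 1 = 1`, `L (n+2) = L (n+1) + L n`. -/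
def L : ℕ → ℕ
  | 0 => 2
  | 1 => 1
  | (n + 2) => L (n + 1) + L n

/-!
Put `x = f (n-2)` and `y = f (n-3)`. Then `f n = 2x + y` and `L n = f n + f (n-2) = 3x + y`,
so both sides are quadratic forms in `x, y`. Comparing the coefficients of `x², xy, y²`
leaves three linear identities `f (k+8) = 9 f (k+2) + 12 f (k+1) + 4 f k`,
`f (k+6) = 3 f (k+2) + 5 f (k+1) + 2 f k` and `f (k+4) = f (k+2) + 2 f (k+1) + f k`
with `k = m - 8`.
-/

lemma f_add_two (k : ℕ) : f (k + 2) = f (k + 1) + f k := by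
  simp only [f, Nat.fib_add_two]
  ring

lemma f_add_four (k : ℕ) : f (k + 4) = f (k + 2) + 2 * f (k + 1) + f k := by
  simp only [f_add_two]
  ring

lemma f_add_six (k : ℕ) : f (k + 6) = 3 * f (k + 2) + 5 * f (k + 1) + 2 * f k := by
  simp only [f_add_two]
  ring

lemma f_add_eight (k : ℕ) : f (k + 8) = 9 * f (k + 2) + 12 * f (k + 1) + 4 * f k := by
  simp only [f_add_two]
  ring

lemma L_add_two (k : ℕ) : L (k + 2) = f (k + 2) + f k := by
  induction k using Nat.twoStepInduction with
  | zero => rfl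
  | one => rfl
  | more k ih₁ ih₂ =>
    show L (k + 3) + L (k + 2) = _
    rw [ih₁, ih₂, f_add_two (k + 2), f_add_two k]
    ring

theorem lucas_fib_identity_two (n m : ℕ) (hn : 3 ≤ n) (hm : 8 ≤ m) :
    L n ^ 2 * f (m - 6) + 2 * L n * f n * f (m - 7) + f n ^ 2 * f (m - 8) =
      f (n - 2) ^ 2 * f m + 2 * f (n - 2) * f (n - 3) * f (m - 2) +
        f (n - 3) ^ 2 * f (m - 4) := by
  obtain ⟨a, rfl⟩ := Nat.exists_eq_add_of_le' hn
  obtain ⟨k, rfl⟩ := Nat.exists_eq_add_of_le' hm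
  have hf : f (a + 3) = 2 * f (a + 1) + f a := by
    rw [f_add_two, f_add_two]
    ring
  have hL : L (a + 3) = 3 * f (a + 1) + f a := by
    rw [L_add_two, hf]
    ring
  rw [show a + 3 - 2 = a + 1 by omega, show a + 3 - 3 = a by omega,
    show k + 8 - 6 = k + 2 by omega, show k + 8 - 7 = k + 1 by omega,
    show k + 8 - 8 = k by omega, show k + 8 - 2 = k + 6 by omega,
    show k + 8 - 4 = k + 4 by omega, hL, hf, f_add_eight, f_add_six, f_add_four]
  ring
end

section
/- Let G be a Gibonacci sequence. For all natural numbers n ≥ 2 and all N with 1 ≤ N ≤ n−1, one has G_N · G_{n−N} + G_{N−1} · G_{n−N−1} = G_1 · G_{n−1} + G_0 · G_{n−2}. (In particular the left-hand side is independent of N.) -/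
/-! Both sides are the value at `(a, b) = (N - 1, n - N - 1)` of
`G (a + 1) * G (b + 1) + G a * G b`. Applying the recurrence to `G (a + 2)` and then to `G (b + 2)`
shows that this expression is unchanged under `(a, b) ↦ (a + 1, b - 1)`, so it depends only on
`a + b`, and at `a = 0` it is `G 1 * G (b + 1) + G 0 * G b`. -/

theorem gibonacci_mul_add_mul {R : Type*} [NonUnitalNonAssocSemiring R] {G : ℕ → R}
    (hG : ∀ n, G (n + 2) = G (n + 1) + G n) (a b : ℕ) :
    G (a + 1) * G (b + 1) + G a * G b = G 1 * G (a + b + 1) + G 0 * G (a + b) := by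
  induction a generalizing b with
  | zero => simp only [Nat.zero_add]
  | succ a ih =>
    calc G (a + 2) * G (b + 1) + G (a + 1) * G b
        = G (a + 1) * G (b + 2) + G a * G (b + 1) := by
          rw [hG a, hG b, add_mul, mul_add]; abel
      _ = G 1 * G (a + 1 + b + 1) + G 0 * G (a + 1 + b) := by
          rw [ih (b + 1), Nat.add_right_comm a 1 b]; rfl

theorem gibonacci_split_identity_general (G : ℕ → ℤ)
    (hG : ∀ n, G (n + 2) = G (n + 1) + G n)
    (n N : ℕ) (hN1 : 1 ≤ N) (hN2 : N ≤ n - 1) :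
    G N * G (n - N) + G (N - 1) * G (n - N - 1) = G 1 * G (n - 1) + G 0 * G (n - 2) := by
  obtain ⟨a, rfl⟩ : ∃ a, N = a + 1 := ⟨N - 1, by omega⟩
  obtain ⟨b, rfl⟩ : ∃ b, n = a + b + 2 := ⟨n - a - 2, by omega⟩
  have hsplit := gibonacci_mul_add_mul hG a b
  rwa [show a + b + 2 - (a + 1) = b + 1 by omega, show a + b + 2 - 1 = a + b + 1 by omega,
    show a + b + 2 - 2 = a + b by omega, Nat.add_sub_cancel, Nat.add_sub_cancel]

theorem gibonacci_split_identity (G : ℕ → ℤ)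
    (hG : ∀ n, G (n + 2) = G (n + 1) + G n)
    (n N : ℕ) (hn : 2 ≤ n) (hN1 : 1 ≤ N) (hN2 : N ≤ n - 1) :
    G N * G (n - N) + G (N - 1) * G (n - N - 1) = G 1 * G (n - 1) + G 0 * G (n - 2) :=
  gibonacci_split_identity_general G hG n N hN1 hN2
end

section
/- Let G be a Gibonacci sequence. For every natural number n ≥ 2, one has (G_1 − G_0) · Σ_{j=1}^{n−1} G_{2n−1−2j} + G_0 · Σ_{j=1}^{n−1} j · G_{2n−1−2j} + 2 · G_0 · G_1 + G_0^2 · (n−2) = G_1 · G_{2n−2} + G_0 · G_{2n−3}. -/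
/-!
Reversing the order of summation turns both sums into sums over the odd-indexed terms
`G (2k+1)`, `k < n - 1`. Telescoping with `G (2k+1) = G (2k+2) - G (2k)` gives
`∑_{k<N} G (2k+1) = G (2N) - G 0`, and the weighted sum `∑_{k<N} (N - k) G (2k+1)` is the sum of
these partial sums, namely `G (2N+1) - G 1 - N G 0`. Substituting, the identity collapses to
`G (2n-1) = G (2n-2) + G (2n-3)`.
-/

open Finset

theorem Finset.sum_Icc_one_eq_sum_range_reflect {M : Type*} [AddCommMonoid M] (F : ℕ → M)
    (N : ℕ) : ∑ j ∈ Icc 1 N, F j = ∑ k ∈ range N, F (N - k) := by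
  refine sum_nbij' (fun j => N - j) (fun k => N - k) ?_ ?_ ?_ ?_ ?_ <;>
    intro a ha <;> simp only [mem_Icc, mem_range] at ha ⊢
  all_goals first | omega | congr 1; omega

section Gibonacci

variable {R : Type*} [CommRing R] {G : ℕ → R}

theorem gibonacci_sum_range_odd (hG : ∀ n, G (n + 2) = G (n + 1) + G n) (N : ℕ) :
    ∑ k ∈ range N, G (2 * k + 1) = G (2 * N) - G 0 := by
  induction N with
  | zero => simp
  | succ N ih =>
    rw [sum_range_succ, ih, show 2 * (N + 1) = 2 * N + 2 by ring, hG]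
    ring

theorem gibonacci_sum_range_weighted_odd (hG : ∀ n, G (n + 2) = G (n + 1) + G n)
    (N : ℕ) :
    ∑ k ∈ range N, ((N - k : ℕ) : R) * G (2 * k + 1) = G (2 * N + 1) - G 1 - N * G 0 := by
  induction N with
  | zero => simp
  | succ N ih =>
    have hshift : ∑ k ∈ range (N + 1), ((N + 1 - k : ℕ) : R) * G (2 * k + 1) =
        ∑ k ∈ range N, ((N - k : ℕ) : R) * G (2 * k + 1) +
          ∑ k ∈ range (N + 1), G (2 * k + 1) := by
      rw [sum_range_succ, sum_range_succ (fun k => G (2 * k + 1)), ← add_assoc,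
        ← sum_add_distrib]
      congr 1
      · refine sum_congr rfl fun k hk => ?_
        rw [mem_range] at hk
        rw [Nat.sub_add_comm hk.le]
        push_cast
        ring
      · simp
    rw [hshift, ih, gibonacci_sum_range_odd hG, show 2 * (N + 1) + 1 = 2 * N + 1 + 2 by ring,
      hG, show 2 * N + 1 + 1 = 2 * (N + 1) by ring]
    push_cast
    ring

end Gibonacci

theorem gibonacci_second_vertical_odd (G : ℕ → ℤ)
    (hG : ∀ n, G (n + 2) = G (n + 1) + G n) (n : ℕ) (hn : 2 ≤ n) :
    (G 1 - G 0) * (∑ j ∈ Finset.Icc 1 (n - 1), G (2 * n - 1 - 2 * j)) +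
      G 0 * (∑ j ∈ Finset.Icc 1 (n - 1), (j : ℤ) * G (2 * n - 1 - 2 * j)) +
      2 * G 0 * G 1 + G 0 ^ 2 * ((n : ℤ) - 2) =
    G 1 * G (2 * n - 2) + G 0 * G (2 * n - 3) := by
  obtain ⟨N, rfl⟩ : ∃ N, n = N + 1 := ⟨n - 1, by omega⟩
  have hodd : ∑ j ∈ Icc 1 (N + 1 - 1), G (2 * (N + 1) - 1 - 2 * j) =
      ∑ k ∈ range N, G (2 * k + 1) := by
    rw [Nat.add_sub_cancel, sum_Icc_one_eq_sum_range_reflect]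
    refine sum_congr rfl fun k hk => ?_
    rw [mem_range] at hk
    congr 1
    omega
  have hweighted : ∑ j ∈ Icc 1 (N + 1 - 1), (j : ℤ) * G (2 * (N + 1) - 1 - 2 * j) =
      ∑ k ∈ range N, ((N - k : ℕ) : ℤ) * G (2 * k + 1) := by
    rw [Nat.add_sub_cancel, sum_Icc_one_eq_sum_range_reflect]
    refine sum_congr rfl fun k hk => ?_
    rw [mem_range] at hk
    congr 2
    omega
  obtain ⟨M, rfl⟩ : ∃ M, N = M + 1 := ⟨N - 1, by omega⟩
  rw [hodd, hweighted, gibonacci_sum_range_odd hG, gibonacci_sum_range_weighted_odd hG,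
    show 2 * (M + 1 + 1) - 2 = 2 * (M + 1) by omega, show 2 * (M + 1 + 1) - 3 = 2 * M + 1 by omega,
    show 2 * (M + 1) + 1 = 2 * M + 1 + 2 by ring, hG, show 2 * M + 1 + 1 = 2 * (M + 1) by ring]
  push_cast
  ring
end

section
/- Let G be a Gibonacci sequence. For every natural number n ≥ 2, one has (G_1 − G_0) · Σ_{j=1}^{n−1} G_{2n−2j} + G_0 · Σ_{j=1}^{n−1} j · G_{2n−2j} + G_0^2 + (G_1 + (n−1) · G_0) · G_1 = G_1 · G_{2n−1} + G_0 · G_{2n−2}. -/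
/-!
Reversing the order of summation (`j ↦ n - j`) turns both sums into sums over the even-indexed
terms `G (2k)`, `1 ≤ k ≤ n - 1`, with weights `1` and `n - k`. Since
`G (2k) = G (2k + 1) - G (2k - 1)`, these sums have the closed forms `∑ G (2k) = G (2n - 1) - G 1`
and `∑ k G (2k) = (n - 1) G (2n - 1) - G (2n - 2) + G 0`, after which the identity is a ring
identity.
-/

open Finset

theorem Finset.sum_Icc_one_reflect {M : Type*} [AddCommMonoid M] (f : ℕ → M) (m : ℕ) :
    ∑ j ∈ Icc 1 m, f (m + 1 - j) = ∑ j ∈ Icc 1 m, f j := by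
  rw [← Ico_add_one_right_eq_Icc, sum_Ico_reflect f 1 (Nat.le_succ _)]
  simp

section Gibonacci

variable {R : Type*} (G : ℕ → R)

theorem sum_Icc_gibonacci_even [AddCommGroup R] (hG : ∀ n, G (n + 2) = G (n + 1) + G n)
    (m : ℕ) : ∑ k ∈ Icc 1 m, G (2 * k) = G (2 * m + 1) - G 1 := by
  induction m with
  | zero => simp
  | succ m ih =>
    rw [sum_Icc_succ_top (by omega), ih, show 2 * (m + 1) + 1 = 2 * m + 1 + 2 by ring, hG]
    abel

theorem sum_Icc_mul_gibonacci_even [Ring R] (hG : ∀ n, G (n + 2) = G (n + 1) + G n) (m : ℕ) :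
    ∑ k ∈ Icc 1 m, (k : R) * G (2 * k) = m * G (2 * m + 1) - G (2 * m) + G 0 := by
  induction m with
  | zero => simp
  | succ m ih =>
    rw [sum_Icc_succ_top (by omega), ih, show 2 * (m + 1) + 1 = 2 * m + 1 + 2 by ring, hG,
      show 2 * (m + 1) = 2 * m + 2 by ring, hG]
    push_cast
    noncomm_ring

end Gibonacci

theorem gibonacci_second_vertical_even (G : ℕ → ℤ)
    (hG : ∀ n, G (n + 2) = G (n + 1) + G n) (n : ℕ) (hn : 2 ≤ n) :
    (G 1 - G 0) * (∑ j ∈ Finset.Icc 1 (n - 1), G (2 * n - 2 * j)) +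
      G 0 * (∑ j ∈ Finset.Icc 1 (n - 1), (j : ℤ) * G (2 * n - 2 * j)) +
      G 0 ^ 2 + (G 1 + ((n : ℤ) - 1) * G 0) * G 1 =
    G 1 * G (2 * n - 1) + G 0 * G (2 * n - 2) := by
  obtain ⟨m, rfl⟩ : ∃ m, n = m + 1 := ⟨n - 1, by omega⟩
  have hsum : ∑ j ∈ Icc 1 m, G (2 * (m + 1) - 2 * j) = ∑ k ∈ Icc 1 m, G (2 * k) := by
    rw [← sum_Icc_one_reflect (fun k ↦ G (2 * k))]
    refine sum_congr rfl fun j hj ↦ ?_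
    grind
  have hweighted : ∑ j ∈ Icc 1 m, (j : ℤ) * G (2 * (m + 1) - 2 * j) =
      ∑ k ∈ Icc 1 m, ((m + 1 : ℤ) - k) * G (2 * k) := by
    rw [← sum_Icc_one_reflect (fun k : ℕ ↦ ((m + 1 : ℤ) - k) * G (2 * k))]
    refine sum_congr rfl fun j hj ↦ ?_
    have hj : j ≤ m := (mem_Icc.mp hj).2
    rw [Nat.cast_sub (by omega), show 2 * (m + 1 - j) = 2 * (m + 1) - 2 * j by omega]
    push_cast
    ring
  rw [Nat.add_sub_cancel, hsum, hweighted]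
  simp only [sub_mul, sum_sub_distrib, ← mul_sum]
  rw [sum_Icc_gibonacci_even G hG, sum_Icc_mul_gibonacci_even G hG,
    show 2 * (m + 1) - 1 = 2 * m + 1 by omega, show 2 * (m + 1) - 2 = 2 * m by omega]
  push_cast
  ring
end

section
/- Let G be a Gibonacci sequence and let p ≥ 2 and m ≥ 4 be natural numbers. Then Σ_{k=p, k ≡ p (mod 2)}^{m−1} ( G_1 · C((k+p−4)/2, p−2) + G_0 · C((k+p−4)/2, p−1) ) · G_{m−k} + ε · ( G_1 · C((m+p−4)/2, p−2) + G_0 · C((m+p−4)/2, p−1) ) · G_1 + Σ_{t=0, t ≡ m (mod 2)}^{p−1} ( G_1^2 · C((m+t−4)/2, t−2) + 2 · G_0 · G_1 · C((m+t−4)/2, t−1) + G_0^2 · C((m+t−4)/2, t) ) = G_1 · G_{m−1} + G_0 · G_{m−2}, where ε = 1 if m ≡ p (mod 2) and ε = 0 otherwise. -/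
/-- Binomial coefficient `C a b` with an integer lower index, with the
convention that it vanishes for negative lower index. -/
def C (a : ℕ) (b : ℤ) : ℤ := if 0 ≤ b then (a.choose b.toNat : ℤ) else 0

/-!
Both sides satisfy the Gibonacci recursion in `m ≥ 2`, so it suffices to compare them at
`m = 2, 3`, where moreover every `p > m + 1` gives the same value as `p = m + 1`. (At `m = 2` the
truncated `(m + t - 4) / 2` is harmless: the tail term at `t = 0` is `G₀²` for every `m`.)

The recursion of the left-hand side comes from Pascal's rule applied to every summand: the head
sum follows the recursion of `G` up to its boundary terms at `k = m, m + 1`; the tail terms split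
as in `tailTerm_add_two_succ`, which overcounts the single term `t = p - 1`; and the corner
(`ε`-)term at `m + 2` makes up for both defects (`verticalCoeff_add_two`).
-/

open Finset

lemma C_of_neg {a : ℕ} {b : ℤ} (hb : b < 0) : C a b = 0 := by
  simp [C, not_le.2 hb]

lemma C_of_lt {a : ℕ} {b : ℤ} (hab : (a : ℤ) < b) : C a b = 0 := by
  rw [C, if_pos (by omega), Nat.choose_eq_zero_of_lt (by omega), Nat.cast_zero]

lemma C_zero_right (a : ℕ) : C a 0 = 1 := by
  simp [C]

lemma C_succ (a : ℕ) (b : ℤ) : C (a + 1) b = C a b + C a (b - 1) := by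
  rcases lt_trichotomy b 0 with hb | rfl | hb
  · rw [C_of_neg hb, C_of_neg hb, C_of_neg (by omega), add_zero]
  · rw [C_zero_right, C_zero_right, C_of_neg (by norm_num), add_zero]
  · obtain ⟨c, rfl⟩ : ∃ c : ℕ, b = c + 1 := ⟨b.toNat - 1, by omega⟩
    simp only [C, add_sub_cancel_right, Nat.cast_nonneg, if_true,
      show (0 : ℤ) ≤ c + 1 by omega, Int.toNat_natCast, show ((c : ℤ) + 1).toNat = c + 1 by omega,
      Nat.choose_succ_succ', Nat.cast_add]
    ring

namespace Gibonacci

variable (G : ℕ → ℤ)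

def verticalCoeff (p k : ℕ) : ℤ :=
  G 1 * C ((k + p - 4) / 2) ((p : ℤ) - 2) + G 0 * C ((k + p - 4) / 2) ((p : ℤ) - 1)

def tailTerm (m t : ℕ) : ℤ :=
  G 1 ^ 2 * C ((m + t - 4) / 2) ((t : ℤ) - 2) +
    2 * G 0 * G 1 * C ((m + t - 4) / 2) ((t : ℤ) - 1) +
    G 0 ^ 2 * C ((m + t - 4) / 2) (t : ℤ)

def headSum (p m : ℕ) : ℤ :=
  ∑ k ∈ (Icc p (m - 1)).filter (fun k => k % 2 = p % 2), verticalCoeff G p k * G (m - k)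

def tailSum (p m : ℕ) : ℤ :=
  ∑ t ∈ (range p).filter (fun t => t % 2 = m % 2), tailTerm G m t

def verticalSum (p m : ℕ) : ℤ :=
  headSum G p m + (if m % 2 = p % 2 then verticalCoeff G p m * G 1 else 0) + tailSum G p m

lemma verticalCoeff_of_lt {p k : ℕ} (hkp : k < p) (h : 4 ≤ k + p) : verticalCoeff G p k = 0 := by
  rw [verticalCoeff, C_of_lt (by omega), C_of_lt (by omega)]
  ring

lemma tailTerm_of_lt {m t : ℕ} (hmt : m < t) (h : 4 ≤ m + t) : tailTerm G m t = 0 := by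
  rw [tailTerm, C_of_lt (by omega), C_of_lt (by omega), C_of_lt (by omega)]
  ring

lemma tailTerm_zero (m : ℕ) : tailTerm G m 0 = G 0 ^ 2 := by
  rw [tailTerm, C_of_neg (by norm_num), C_of_neg (by norm_num), Nat.cast_zero, C_zero_right]
  ring

lemma tailTerm_add_two_succ {m t : ℕ} (h : 3 ≤ m + t) :
    tailTerm G (m + 2) (t + 1) = tailTerm G m (t + 1) + tailTerm G (m + 1) t := by
  have hrow : (m + 2 + (t + 1) - 4) / 2 = (m + (t + 1) - 4) / 2 + 1 := by omega
  have hrow' : (m + 1 + t - 4) / 2 = (m + (t + 1) - 4) / 2 := by omega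
  simp only [tailTerm, hrow, hrow', C_succ, Nat.cast_add, Nat.cast_one]
  ring_nf

lemma verticalCoeff_add_two {p m : ℕ} (h : 3 ≤ m + p) :
    verticalCoeff G (p + 1) (m + 2) * G 1 + verticalCoeff G (p + 1) m * G 0 =
      verticalCoeff G (p + 1) m * G 1 + tailTerm G (m + 1) p := by
  have hrow : (m + 2 + (p + 1) - 4) / 2 = (m + (p + 1) - 4) / 2 + 1 := by omega
  have hrow' : (m + 1 + p - 4) / 2 = (m + (p + 1) - 4) / 2 := by omega
  simp only [verticalCoeff, tailTerm, hrow, hrow', C_succ, Nat.cast_add, Nat.cast_one]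
  ring_nf

variable {G}

lemma headSum_eq_sum_range {p : ℕ} (hp : 0 < p) (m : ℕ) :
    headSum G p m =
      ∑ k ∈ range m, if p ≤ k ∧ k % 2 = p % 2 then verticalCoeff G p k * G (m - k) else 0 := by
  rw [headSum, ← sum_filter]
  congr 1
  ext k
  simp only [mem_filter, mem_Icc, mem_range]
  omega

lemma headSum_add_two (hG : ∀ n, G (n + 2) = G (n + 1) + G n) {p : ℕ} (hp : 0 < p) (m : ℕ) :
    headSum G p (m + 2) = headSum G p (m + 1) + headSum G p m +
      (if p ≤ m ∧ m % 2 = p % 2 then verticalCoeff G p m * G 0 else 0) +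
      (if p ≤ m + 1 ∧ (m + 1) % 2 = p % 2 then verticalCoeff G p (m + 1) * G 1 else 0) := by
  have hbulk : (∑ k ∈ range m,
      if p ≤ k ∧ k % 2 = p % 2 then verticalCoeff G p k * G (m + 2 - k) else 0) =
        (∑ k ∈ range m, if p ≤ k ∧ k % 2 = p % 2 then verticalCoeff G p k * G (m + 1 - k) else 0) +
        ∑ k ∈ range m, if p ≤ k ∧ k % 2 = p % 2 then verticalCoeff G p k * G (m - k) else 0 := by
    rw [← sum_add_distrib]
    refine sum_congr rfl fun k hk => ?_
    rw [mem_range] at hk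
    rw [show m + 2 - k = m - k + 2 by omega, show m + 1 - k = m - k + 1 by omega, hG]
    split_ifs <;> ring
  simp only [headSum_eq_sum_range hp, sum_range_succ, hbulk, show m + 2 - m = 2 by omega,
    show m + 2 - (m + 1) = 1 by omega, show m + 1 - m = 1 by omega, hG 0]
  split_ifs <;> ring

lemma tailSum_add_two {m : ℕ} (hm : 2 ≤ m) (p : ℕ) :
    tailSum G (p + 1) (m + 2) + (if p % 2 = (m + 1) % 2 then tailTerm G (m + 1) p else 0) =
      tailSum G (p + 1) m + tailSum G (p + 1) (m + 1) := by
  have hsplit : ∀ i ∈ range p,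
      (if (i + 1) % 2 = (m + 2) % 2 then tailTerm G (m + 2) (i + 1) else 0) =
        (if (i + 1) % 2 = m % 2 then tailTerm G m (i + 1) else 0) +
          (if i % 2 = (m + 1) % 2 then tailTerm G (m + 1) i else 0) := fun i _ => by
    by_cases hi : (i + 1) % 2 = m % 2
    · rw [if_pos (by omega), if_pos hi, if_pos (by omega), tailTerm_add_two_succ G (by omega)]
    · rw [if_neg (by omega), if_neg hi, if_neg (by omega), add_zero]
  have hshift := sum_range_succ' (fun t => if t % 2 = (m + 2) % 2 then tailTerm G (m + 2) t else 0) p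
  have hshift' := sum_range_succ' (fun t => if t % 2 = m % 2 then tailTerm G m t else 0) p
  have hlast := sum_range_succ (fun t => if t % 2 = (m + 1) % 2 then tailTerm G (m + 1) t else 0) p
  rw [tailSum, tailSum, tailSum, sum_filter, sum_filter, sum_filter, hshift, hshift', hlast,
    sum_congr rfl hsplit, sum_add_distrib, tailTerm_zero, tailTerm_zero, Nat.add_mod_right]
  ring

lemma verticalSum_add_two (hG : ∀ n, G (n + 2) = G (n + 1) + G n) {p m : ℕ} (hp : 2 ≤ p)
    (hm : 2 ≤ m) : verticalSum G p (m + 2) = verticalSum G p (m + 1) + verticalSum G p m := by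
  obtain ⟨q, rfl⟩ : ∃ q, p = q + 1 := ⟨p - 1, by omega⟩
  have hguard : ∀ k x, 2 ≤ k → (if q + 1 ≤ k ∧ k % 2 = (q + 1) % 2 then
      verticalCoeff G (q + 1) k * x else 0) =
        if k % 2 = (q + 1) % 2 then verticalCoeff G (q + 1) k * x else 0 := fun k x hk => by
    by_cases hkq : q + 1 ≤ k
    · simp only [hkq, true_and]
    · rw [verticalCoeff_of_lt G (by omega) (by omega)]
      simp
  have hcorner : (if m % 2 = (q + 1) % 2 then verticalCoeff G (q + 1) (m + 2) * G 1 else 0) +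
      (if m % 2 = (q + 1) % 2 then verticalCoeff G (q + 1) m * G 0 else 0) =
        (if m % 2 = (q + 1) % 2 then verticalCoeff G (q + 1) m * G 1 else 0) +
          (if q % 2 = (m + 1) % 2 then tailTerm G (m + 1) q else 0) := by
    by_cases hmq : m % 2 = (q + 1) % 2
    · rw [if_pos hmq, if_pos hmq, if_pos hmq, if_pos (by omega)]
      exact verticalCoeff_add_two G (by omega)
    · rw [if_neg hmq, if_neg hmq, if_neg hmq, if_neg (by omega)]
  simp only [verticalSum, Nat.add_mod_right]
  linear_combination headSum_add_two hG (p := q + 1) (by omega) m + hguard m (G 0) hm +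
    hguard (m + 1) (G 1) (by omega) + tailSum_add_two hm q + hcorner

lemma verticalSum_succ_of_lt {p m : ℕ} (hmp : m < p) (h : 4 ≤ m + p) :
    verticalSum G (p + 1) m = verticalSum G p m := by
  have hhead : ∀ q, p ≤ q → headSum G q m = 0 := fun q hq => by
    rw [headSum, Icc_eq_empty (by omega), filter_empty, sum_empty]
  rw [verticalSum, verticalSum, hhead _ (by omega), hhead _ le_rfl,
    verticalCoeff_of_lt G (by omega) (by omega), verticalCoeff_of_lt G hmp h, tailSum, tailSum,
    sum_filter, sum_filter, sum_range_succ, tailTerm_of_lt G hmp (by omega)]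
  simp

lemma verticalSum_eq_of_lt {p m : ℕ} (hmp : m < p) (hm : 2 ≤ m) :
    verticalSum G p m = verticalSum G (m + 1) m := by
  induction p, hmp using Nat.le_induction with
  | base => rfl
  | succ p hp ih => rw [verticalSum_succ_of_lt hp (by omega), ih]

lemma verticalSum_two {p : ℕ} (hp : 2 ≤ p) : verticalSum G p 2 = G 1 * G 1 + G 0 * G 0 := by
  rcases le_or_gt p 2 with hp2 | hp2
  · interval_cases p
    simp [verticalSum, headSum, tailSum, verticalCoeff, tailTerm, C, sum_filter, sum_range_succ]
    ring
  · rw [verticalSum_eq_of_lt hp2 le_rfl]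
    simp [verticalSum, headSum, tailSum, verticalCoeff, tailTerm, C, sum_filter, sum_range_succ]
    ring

lemma verticalSum_three (hG : ∀ n, G (n + 2) = G (n + 1) + G n) {p : ℕ} (hp : 2 ≤ p) :
    verticalSum G p 3 = G 1 * G 2 + G 0 * G 1 := by
  rw [hG 0]
  rcases le_or_gt p 3 with hp3 | hp3
  · interval_cases p <;>
    simp [verticalSum, headSum, tailSum, verticalCoeff, tailTerm, C, sum_filter, sum_range_succ] <;>
    ring
  · rw [verticalSum_eq_of_lt hp3 (by norm_num)]
    simp [verticalSum, headSum, tailSum, verticalCoeff, tailTerm, C, sum_filter, sum_range_succ,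
      Nat.choose_eq_zero_of_lt]
    ring

lemma verticalSum_eq (hG : ∀ n, G (n + 2) = G (n + 1) + G n) {p : ℕ} (hp : 2 ≤ p) (n : ℕ) :
    verticalSum G p (n + 2) = G 1 * G (n + 1) + G 0 * G n := by
  induction n using Nat.twoStepInduction with
  | zero => exact verticalSum_two hp
  | one => exact verticalSum_three hG hp
  | more n ih ih' =>
    rw [verticalSum_add_two hG hp (by omega), ih', ih, hG (n + 1), hG n]
    ring

end Gibonacci

theorem gibonacci_pth_vertical (G : ℕ → ℤ)
    (hG : ∀ n, G (n + 2) = G (n + 1) + G n)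
    (p m : ℕ) (hp : 2 ≤ p) (hm : 4 ≤ m) :
    (∑ k ∈ (Finset.Icc p (m - 1)).filter (fun k => k % 2 = p % 2),
        (G 1 * C ((k + p - 4) / 2) ((p : ℤ) - 2) +
          G 0 * C ((k + p - 4) / 2) ((p : ℤ) - 1)) * G (m - k)) +
      (if m % 2 = p % 2 then
        (G 1 * C ((m + p - 4) / 2) ((p : ℤ) - 2) +
          G 0 * C ((m + p - 4) / 2) ((p : ℤ) - 1)) * G 1
      else 0) +
      (∑ t ∈ (Finset.range p).filter (fun t => t % 2 = m % 2),
        (G 1 ^ 2 * C ((m + t - 4) / 2) ((t : ℤ) - 2) +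
          2 * G 0 * G 1 * C ((m + t - 4) / 2) ((t : ℤ) - 1) +
          G 0 ^ 2 * C ((m + t - 4) / 2) (t : ℤ))) =
    G 1 * G (m - 1) + G 0 * G (m - 2) := by
  obtain ⟨n, rfl⟩ : ∃ n, m = n + 2 := ⟨m - 2, by omega⟩
  exact Gibonacci.verticalSum_eq hG hp n
end

section
/- Let G be a Gibonacci sequence. For every natural number n ≥ 1, one has Σ_{j=1}^{⌊(n−1)/2⌋} f_{n−2j} · ( G_1 + (j−1) · G_0 ) + G_1 + ⌊n/2⌋ · G_0 = G_n. -/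
open Finset

theorem gibonacci_eq_fib_smul {M : Type*} [AddCommMonoid M] (G : ℕ → M)
    (hG : ∀ n, G (n + 2) = G (n + 1) + G n) (m : ℕ) :
    G (m + 1) = Nat.fib m • G 0 + Nat.fib (m + 1) • G 1 := by
  induction m using Nat.twoStepInduction with
  | zero => simp
  | one => simp [hG 0, add_comm]
  | more m ih₁ ih₂ =>
    rw [hG, ih₁, ih₂]
    simp only [Nat.fib_add_two, add_smul]
    abel

theorem Nat.sum_range_fib_sub_two_mul_add_one (m : ℕ) :
    ∑ i ∈ range (m / 2), fib (m - 2 * i) + 1 = fib (m + 1) := by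
  induction m using Nat.twoStepInduction with
  | zero => simp
  | one => simp
  | more m ih _ =>
    rw [show (m + 2) / 2 = m / 2 + 1 by omega, sum_range_succ']
    simp only [show ∀ i, m + 2 - 2 * (i + 1) = m - 2 * i by omega, mul_zero, Nat.sub_zero,
      fib_add_two]
    omega

theorem Nat.sum_range_mul_fib_sub_two_mul_add_succ_div_two (m : ℕ) :
    ∑ i ∈ range (m / 2), i * fib (m - 2 * i) + (m + 1) / 2 = fib m := by
  induction m using Nat.twoStepInduction with
  | zero => simp
  | one => simp
  | more m ih _ =>
    rw [show (m + 2) / 2 = m / 2 + 1 by omega, sum_range_succ', fib_add_two]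
    simp only [show ∀ i, m + 2 - 2 * (i + 1) = m - 2 * i by omega, add_mul, one_mul,
      sum_add_distrib, zero_mul, add_zero]
    have := sum_range_fib_sub_two_mul_add_one m
    omega

theorem gibonacci_fib_sum (G : ℕ → ℤ)
    (hG : ∀ n, G (n + 2) = G (n + 1) + G n) (n : ℕ) (hn : 1 ≤ n) :
    (∑ j ∈ Finset.Icc 1 ((n - 1) / 2), (f (n - 2 * j) : ℤ) * (G 1 + ((j : ℤ) - 1) * G 0)) +
      G 1 + ((n / 2 : ℕ) : ℤ) * G 0 = G n := by
  obtain ⟨m, rfl⟩ : ∃ m, n = m + 1 := ⟨n - 1, by omega⟩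
  have reindex : ∑ j ∈ Icc 1 (m / 2), (f (m + 1 - 2 * j) : ℤ) * (G 1 + ((j : ℤ) - 1) * G 0) =
      ((∑ i ∈ range (m / 2), Nat.fib (m - 2 * i) : ℕ) : ℤ) * G 1 +
        ((∑ i ∈ range (m / 2), i * Nat.fib (m - 2 * i) : ℕ) : ℤ) * G 0 := by
    rw [← Ico_add_one_right_eq_Icc, sum_Ico_eq_sum_range, Nat.add_sub_cancel, Nat.cast_sum,
      Nat.cast_sum, sum_mul, sum_mul, ← sum_add_distrib]
    refine sum_congr rfl fun i _ => ?_
    have : m + 1 - 2 * (1 + i) + 1 = m - 2 * i := by grind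
    simp only [f, this]
    push_cast
    ring
  rw [Nat.add_sub_cancel, reindex, gibonacci_eq_fib_smul G hG m, nsmul_eq_mul, nsmul_eq_mul,
    ← Nat.sum_range_fib_sub_two_mul_add_one, ← Nat.sum_range_mul_fib_sub_two_mul_add_succ_div_two]
  push_cast
  ring
end

section
/- Let G be a Gibonacci sequence. For every natural number n ≥ 1, one has Σ_{j=1}^{n−1} j · G_{2n−1−2j} + G_1 + (n−1) · G_0 = G_{2n−1}. -/
/-!
Summing the recurrence `G (2i+2) - G (2i) = G (2i+1)` telescopes to
`∑_{i<k} G (2i+1) = G (2k) - G 0`. The weighted sum is the sum of these partial sums over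
`k ≤ m`, which an induction on `m` turns into `G (2m+1) - G 1 - m G 0`; reversing the order of
summation (`j = m - i`) gives the stated form with `m = n - 1`.
-/

open Finset

section Gibonacci

variable {R : Type*} [CommRing R] {G : ℕ → R}

theorem sum_range_gibonacci_odd (hG : ∀ n, G (n + 2) = G (n + 1) + G n) (k : ℕ) :
    ∑ i ∈ range k, G (2 * i + 1) = G (2 * k) - G 0 := by
  induction k with
  | zero => simp
  | succ k ih =>
    rw [sum_range_succ, ih, mul_add_one, hG]
    ring

theorem sum_range_sub_mul_gibonacci_odd (hG : ∀ n, G (n + 2) = G (n + 1) + G n) (m : ℕ) :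
    ∑ i ∈ range m, ((m : R) - i) * G (2 * i + 1) + G 1 + m * G 0 = G (2 * m + 1) := by
  induction m with
  | zero => simp
  | succ m ih =>
    have hsplit : ∑ i ∈ range (m + 1), ((↑(m + 1) : R) - i) * G (2 * i + 1) =
        ∑ i ∈ range m, ((m : R) - i) * G (2 * i + 1) + ∑ i ∈ range (m + 1), G (2 * i + 1) :=
      calc ∑ i ∈ range (m + 1), ((↑(m + 1) : R) - i) * G (2 * i + 1)
          _ = ∑ i ∈ range (m + 1), (((m : R) - i) * G (2 * i + 1) + G (2 * i + 1)) :=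
            sum_congr rfl fun i _ => by push_cast; ring
          _ = _ := by rw [sum_add_distrib, sum_range_succ _ m, sub_self, zero_mul, add_zero]
    rw [hsplit, sum_range_gibonacci_odd hG]
    push_cast
    linear_combination ih - hG (2 * m + 1)

theorem sum_Icc_mul_gibonacci (hG : ∀ n, G (n + 2) = G (n + 1) + G n) (m : ℕ) :
    ∑ j ∈ Icc 1 m, (j : R) * G (2 * m + 1 - 2 * j) + G 1 + m * G 0 = G (2 * m + 1) := by
  have hreflect : ∑ j ∈ Icc 1 m, (j : R) * G (2 * m + 1 - 2 * j) =
      ∑ i ∈ range m, ((m : R) - i) * G (2 * i + 1) := by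
    have h := sum_Ico_reflect (fun i => ((m : R) - i) * G (2 * i + 1)) 1 (le_refl (m + 1))
    rw [Nat.add_sub_cancel, Nat.sub_self, Ico_add_one_right_eq_Icc, ← range_eq_Ico] at h
    rw [← h]
    refine sum_congr rfl fun j hj => ?_
    have hjm : j ≤ m := (mem_Icc.mp hj).2
    rw [Nat.cast_sub hjm, sub_sub_cancel, show 2 * (m - j) + 1 = 2 * m + 1 - 2 * j by omega]
  rw [hreflect, sum_range_sub_mul_gibonacci_odd hG]

end Gibonacci

theorem gibonacci_weighted_sum_odd (G : ℕ → ℤ)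
    (hG : ∀ n, G (n + 2) = G (n + 1) + G n) (n : ℕ) (hn : 1 ≤ n) :
    (∑ j ∈ Finset.Icc 1 (n - 1), (j : ℤ) * G (2 * n - 1 - 2 * j)) +
      G 1 + ((n : ℤ) - 1) * G 0 = G (2 * n - 1) := by
  obtain ⟨m, rfl⟩ : ∃ m, n = m + 1 := ⟨n - 1, by omega⟩
  have hodd : 2 * (m + 1) - 1 = 2 * m + 1 := by omega
  simpa [hodd] using sum_Icc_mul_gibonacci hG m
end

section
/- Let G be a Gibonacci sequence and G′ its modified Gibonacci sequence. For all natural numbers n ≥ 2 and all N with 1 ≤ N ≤ n−1, one has G_N · G′_{n−N} + G_{N−1} · G′_{n−N−1} = G_0 · G_{n−1} + G_1 · G_{n−2}, and moreover G_0 · G_{n−1} + G_1 · G_{n−2} = G_1 · G′_{n−1} + G_0 · G′_{n−2}. -/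
/-!
For any two Gibonacci sequences `F` and `H`, the quantity `F (a + 1) * H (m + 1) + F a * H m`
depends only on `a + m`: moving one step from `a` to `m` is the recurrence applied once to each
factor. Taking `a = 0` evaluates it, and applying this to `(G, G')` and to `(G', G)` gives both
equalities, the swapped initial values of `G'` turning one into the other.
-/

theorem gibonacci_succ_mul_succ_add_mul {R : Type*} [CommRing R] {F H : ℕ → R}
    (hF : ∀ n, F (n + 2) = F (n + 1) + F n) (hH : ∀ n, H (n + 2) = H (n + 1) + H n) (a m : ℕ) :
    F (a + 1) * H (m + 1) + F a * H m = F 1 * H (a + m + 1) + F 0 * H (a + m) := by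
  induction a generalizing m with
  | zero => simp
  | succ a ih =>
    have shift : F (a + 2) * H (m + 1) + F (a + 1) * H m
        = F (a + 1) * H (m + 2) + F a * H (m + 1) := by
      linear_combination H (m + 1) * hF a - F (a + 1) * hH m
    rw [shift, ih (m + 1), show a + (m + 1) = a + 1 + m by omega]

theorem gibonacci_modified_split_general (G G' : ℕ → ℤ)
    (hG : ∀ n, G (n + 2) = G (n + 1) + G n)
    (hG' : ∀ n, G' (n + 2) = G' (n + 1) + G' n)
    (h0 : G' 0 = G 1) (h1 : G' 1 = G 0)
    (n N : ℕ) (hN1 : 1 ≤ N) (hN2 : N ≤ n - 1) :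
    G N * G' (n - N) + G (N - 1) * G' (n - N - 1) = G 0 * G (n - 1) + G 1 * G (n - 2) ∧
      G 0 * G (n - 1) + G 1 * G (n - 2) = G 1 * G' (n - 1) + G 0 * G' (n - 2) := by
  obtain ⟨a, rfl⟩ : ∃ a, N = a + 1 := ⟨N - 1, by omega⟩
  obtain ⟨m, rfl⟩ : ∃ m, n = a + m + 2 := ⟨n - a - 2, by omega⟩
  have split := gibonacci_succ_mul_succ_add_mul hG hG' a m
  have swap := gibonacci_succ_mul_succ_add_mul hG' hG (a + m) 0
  simp only [Nat.add_zero, Nat.zero_add, h0, h1] at swap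
  have e1 : a + m + 2 - (a + 1) = m + 1 := by omega
  have e2 : a + m + 2 - 1 = a + m + 1 := by omega
  have e3 : a + m + 2 - 2 = a + m := by omega
  rw [e1, e2, e3, Nat.add_sub_cancel, Nat.add_sub_cancel, split]
  exact ⟨by linear_combination swap, by linear_combination -swap⟩

theorem gibonacci_modified_split (G G' : ℕ → ℤ)
    (hG : ∀ n, G (n + 2) = G (n + 1) + G n)
    (hG' : ∀ n, G' (n + 2) = G' (n + 1) + G' n)
    (h0 : G' 0 = G 1) (h1 : G' 1 = G 0)
    (n N : ℕ) (hn : 2 ≤ n) (hN1 : 1 ≤ N) (hN2 : N ≤ n - 1) :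
    G N * G' (n - N) + G (N - 1) * G' (n - N - 1) = G 0 * G (n - 1) + G 1 * G (n - 2) ∧
      G 0 * G (n - 1) + G 1 * G (n - 2) = G 1 * G' (n - 1) + G 0 * G' (n - 2) :=
  gibonacci_modified_split_general G G' hG hG' h0 h1 n N hN1 hN2
end

section
/- Let G be a Gibonacci sequence and G′ its modified Gibonacci sequence. For every natural number n ≥ 2, one has G_1 · (G_n − G′_n) + G_0 · (G_{n−1} − G′_{n−1}) = (G_1 − G_0) · G_{n−2}. -/
/-! Both sides of the identity, viewed as functions of `n`, are Gibonacci sequences: the left one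
is a linear combination of shifts of the Gibonacci sequence `G - G'`. A Gibonacci sequence is
determined by its first two terms, and here these agree because `G - G'` starts `-c, c, 0, c`
with `c = G₁ - G₀`. -/

def IsGibonacci {R : Type*} [Add R] (f : ℕ → R) : Prop :=
  ∀ n, f (n + 2) = f (n + 1) + f n

namespace IsGibonacci

variable {R : Type*}

theorem ext [Add R] {f g : ℕ → R} (hf : IsGibonacci f) (hg : IsGibonacci g)
    (h0 : f 0 = g 0) (h1 : f 1 = g 1) : f = g := by
  funext n
  induction n using Nat.twoStepInduction with
  | zero => exact h0
  | one => exact h1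
  | more n ih₀ ih₁ => rw [hf, hg, ih₀, ih₁]

theorem shift [Add R] {f : ℕ → R} (hf : IsGibonacci f) (k : ℕ) :
    IsGibonacci fun n ↦ f (n + k) := fun n ↦ by
  simpa only [Nat.add_right_comm] using hf (n + k)

theorem add [AddCommSemigroup R] {f g : ℕ → R} (hf : IsGibonacci f) (hg : IsGibonacci g) :
    IsGibonacci (f + g) := fun n ↦ by
  simp only [Pi.add_apply, hf n, hg n, add_add_add_comm]

theorem sub [AddCommGroup R] {f g : ℕ → R} (hf : IsGibonacci f) (hg : IsGibonacci g) :
    IsGibonacci (f - g) := fun n ↦ by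
  simp only [Pi.sub_apply, hf n, hg n, add_sub_add_comm]

theorem const_mul [Distrib R] {f : ℕ → R} (hf : IsGibonacci f) (c : R) :
    IsGibonacci fun n ↦ c * f n := fun n ↦ by
  simp only [hf n, mul_add]

theorem mul_sub_swap_add_two [CommRing R] {G G' : ℕ → R} (hG : IsGibonacci G)
    (hG' : IsGibonacci G') (h0 : G' 0 = G 1) (h1 : G' 1 = G 0) (k : ℕ) :
    G 1 * (G (k + 2) - G' (k + 2)) + G 0 * (G (k + 1) - G' (k + 1)) = (G 1 - G 0) * G k := by
  have hD : IsGibonacci (G - G') := hG.sub hG'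
  have hLHS : IsGibonacci fun k ↦ G 1 * (G - G') (k + 2) + G 0 * (G - G') (k + 1) :=
    ((hD.shift 2).const_mul _).add ((hD.shift 1).const_mul _)
  refine congrFun (hLHS.ext (hG.const_mul (G 1 - G 0)) ?_ ?_) k
  · simp only [Pi.sub_apply, hG 0, hG' 0, h0, h1]
    ring
  · simp only [Pi.sub_apply, hG 1, hG' 1, hG 0, hG' 0, h0, h1]
    ring

end IsGibonacci

theorem gibonacci_modified_weighted_diff (G G' : ℕ → ℤ)
    (hG : ∀ n, G (n + 2) = G (n + 1) + G n)
    (hG' : ∀ n, G' (n + 2) = G' (n + 1) + G' n)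
    (h0 : G' 0 = G 1) (h1 : G' 1 = G 0)
    (n : ℕ) (hn : 2 ≤ n) :
    G 1 * (G n - G' n) + G 0 * (G (n - 1) - G' (n - 1)) = (G 1 - G 0) * G (n - 2) := by
  obtain ⟨k, rfl⟩ := Nat.exists_eq_add_of_le' hn
  simpa using IsGibonacci.mul_sub_swap_add_two hG hG' h0 h1 k
end

section
/- Let G be a Gibonacci sequence. For all natural numbers n and p with 1 ≤ p ≤ n, one has G_n^2 = G_{n+p} · G_{n−p} + (−1)^{n+p−1} · f_{p−1} · (G_0 · G_{p+1} − G_1 · G_p). -/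
theorem gibonacci_add_add_one {M : Type*} [AddCommMonoid M] (G : ℕ → M)
    (hG : ∀ n, G (n + 2) = G (n + 1) + G n) (m q : ℕ) :
    G (m + q + 1) = Nat.fib q • G m + Nat.fib (q + 1) • G (m + 1) := by
  induction q generalizing m with
  | zero => simp
  | succ q ih =>
    rw [show m + (q + 1) + 1 = m + 1 + q + 1 by omega, ih, hG, Nat.fib_add_two, add_smul,
      smul_add]
    abel

theorem gibonacci_casoratian {R : Type*} [CommRing R] (A B : ℕ → R)
    (hA : ∀ n, A (n + 2) = A (n + 1) + A n) (hB : ∀ n, B (n + 2) = B (n + 1) + B n) (n : ℕ) :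
    A n * B (n + 1) - A (n + 1) * B n = (-1) ^ n * (A 0 * B 1 - A 1 * B 0) := by
  induction n with
  | zero => simp
  | succ n ih =>
    rw [hA, hB, pow_succ, mul_right_comm, ← ih]
    ring

theorem gibonacci_catalan_like (G : ℕ → ℤ)
    (hG : ∀ n, G (n + 2) = G (n + 1) + G n)
    (n p : ℕ) (hp1 : 1 ≤ p) (hpn : p ≤ n) :
    G n ^ 2 = G (n + p) * G (n - p) +
      (-1 : ℤ) ^ (n + p - 1) * (f (p - 1) : ℤ) * (G 0 * G (p + 1) - G 1 * G p) := by
  obtain ⟨q, rfl⟩ : ∃ q, p = q + 1 := ⟨p - 1, by omega⟩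
  obtain ⟨m, rfl⟩ : ∃ m, n = m + (q + 1) := ⟨n - (q + 1), by omega⟩
  have hcas : G m * G (m + q + 1 + 1) - G (m + 1) * G (m + q + 1)
      = (-1) ^ m * (G 0 * G (q + 1 + 1) - G 1 * G (q + 1)) := by
    have := gibonacci_casoratian G (fun j => G (j + (q + 1))) hG
      (fun j => by simpa only [add_right_comm] using hG (j + (q + 1))) m
    simpa only [zero_add, add_comm 1, ← add_assoc, add_right_comm _ 1] using this
  have hmid := gibonacci_add_add_one G hG m q
  have hfar := gibonacci_add_add_one G hG (m + q + 1) q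
  simp only [nsmul_eq_mul] at hmid hfar
  have hsign : (-1 : ℤ) ^ (m + (q + 1) + (q + 1) - 1) = -(-1) ^ m := by
    rw [show m + (q + 1) + (q + 1) - 1 = m + 2 * q + 1 by omega, pow_succ, pow_add, pow_mul]
    norm_num
  rw [hsign, Nat.add_sub_cancel, f, Nat.add_sub_cancel,
    show m + (q + 1) + (q + 1) = m + q + 1 + q + 1 by omega, ← add_assoc]
  linear_combination G (m + q + 1) * hmid - G m * hfar - Nat.fib (q + 1) * hcas
end

section
/- Let G be a Gibonacci sequence. For all natural numbers m ≥ 1 and r ≥ 1, the integer G_m divides G_{m·r} − G_{m−1} · F_{(r−1)·m}; equivalently, G_{m·r} ≡ G_{m−1} · F_{(r−1)·m} (mod G_m). -/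
section Gibonacci

variable {R : Type*} [Semiring R] {G : ℕ → R}

theorem gibonacci_add_succ (hG : ∀ n, G (n + 2) = G (n + 1) + G n) (n k : ℕ) :
    G (n + k + 1) = Nat.fib k * G n + Nat.fib (k + 1) * G (n + 1) := by
  induction k using Nat.twoStepInduction with
  | zero => simp
  | one => rw [show n + 1 + 1 = n + 2 from rfl, hG n]; simp [add_comm]
  | more k ih₀ ih₁ =>
    have hstep : G (n + (k + 2) + 1) = G (n + (k + 1) + 1) + G (n + k + 1) :=
      hG (n + k + 1)
    rw [hstep, ih₀, ih₁]
    simp only [Nat.fib_add_two, Nat.cast_add, add_mul]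
    abel

end Gibonacci

theorem gibonacci_divisibility_general (G : ℕ → ℤ)
    (hG : ∀ n, G (n + 2) = G (n + 1) + G n)
    (m r : ℕ) (hr : 1 ≤ r) :
    G m ∣ G (m * r) - G (m - 1) * (Nat.fib ((r - 1) * m) : ℤ) := by
  obtain ⟨s, rfl⟩ : ∃ s, r = s + 1 := ⟨r - 1, by omega⟩
  rcases m with _ | n
  · simp
  · have hindex : (n + 1) * (s + 1) = n + s * (n + 1) + 1 := by ring
    rw [hindex, gibonacci_add_succ hG, Nat.add_sub_cancel, Nat.add_sub_cancel, mul_comm (G n)]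
    exact ⟨Nat.fib (s * (n + 1) + 1), by ring⟩

theorem gibonacci_divisibility (G : ℕ → ℤ)
    (hG : ∀ n, G (n + 2) = G (n + 1) + G n)
    (m r : ℕ) (hm : 1 ≤ m) (hr : 1 ≤ r) :
    G m ∣ G (m * r) - G (m - 1) * (Nat.fib ((r - 1) * m) : ℤ) :=
  gibonacci_divisibility_general G hG m r hr
end

section
/- For all natural numbers N ≥ 2 and n ≥ N + 1, setting d = ⌊(n−1)/N⌋ (so d ≥ 1), the Fibonacci numbers satisfy the lacunary recurrence F_n = F_{N+1} · F_{n−N} + F_N^2 · Σ_{k=2}^{d} F_{N−1}^{k−2} · F_{n−kN} + F_N · F_{N−1}^{d−1} · F_{(n−1) mod N}. -/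
/-!
Shifting by `N` steps, `F (j + N) = F (N - 1) * F j + F N * F (j + 1)`, so along each residue class
mod `N` the Fibonacci numbers satisfy a first-order inhomogeneous recurrence with multiplier
`F (N - 1)`. Unrolling it from `n - N - 1` down to `(n - 1) % N` expresses `F (n - N - 1)`, and
`F n = F N * F (n - N - 1) + F (N + 1) * F (n - N)` gives the identity.
-/

open Finset Nat

theorem apply_add_mul_eq_pow_mul_add_sum {R : Type*} [Semiring R] (u w : ℕ → R) (a : R)
    (N : ℕ) (h : ∀ j, u (j + N) = a * u j + w j) (r d : ℕ) :
    u (r + d * N) = a ^ d * u r + ∑ i ∈ range d, a ^ i * w (r + (d - 1 - i) * N) := by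
  induction d generalizing r with
  | zero => simp
  | succ d ih =>
    have hshift : ∀ i ∈ range d,
        a ^ i * w (r + N + (d - 1 - i) * N) = a ^ i * w (r + (d - i) * N) := by
      intro i hi
      rw [mem_range] at hi
      rw [show d - i = d - 1 - i + 1 by omega]
      ring_nf
    rw [show r + (d + 1) * N = r + N + d * N by ring, ih, sum_congr rfl hshift, h,
      sum_range_succ, pow_succ]
    simp only [Nat.add_sub_cancel, Nat.sub_self, zero_mul, add_zero, mul_add, mul_assoc]
    abel

theorem Nat.fib_add_mul_succ (M r d : ℕ) :
    fib (r + d * (M + 1)) = fib M ^ d * fib r +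
      fib (M + 1) * ∑ i ∈ range d, fib M ^ i * fib (r + (d - 1 - i) * (M + 1) + 1) := by
  have hrec : ∀ j, fib (j + (M + 1)) = fib M * fib j + fib (M + 1) * fib (j + 1) := fun j => by
    rw [← add_assoc, fib_add, mul_comm (fib j), mul_comm (fib (j + 1))]
  rw [apply_add_mul_eq_pow_mul_add_sum fib _ _ _ hrec, mul_sum]
  congr 1
  exact sum_congr rfl fun i _ => by ring

theorem sum_Icc_two_fib_sub_mul (M r e n : ℕ) (hn : n = r + (e + 1) * (M + 1) + 1) :
    ∑ k ∈ Icc 2 (e + 1), fib M ^ (k - 2) * fib (n - k * (M + 1)) =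
      ∑ i ∈ range e, fib M ^ i * fib (r + (e - 1 - i) * (M + 1) + 1) := by
  rw [← Ico_add_one_right_eq_Icc, sum_Ico_eq_sum_range, show e + 1 + 1 - 2 = e by omega]
  refine sum_congr rfl fun i hi => ?_
  obtain ⟨j, rfl⟩ : ∃ j, e = j + i + 1 := ⟨e - 1 - i, by rw [mem_range] at hi; omega⟩
  rw [show 2 + i - 2 = i by omega, show j + i + 1 - 1 - i = j by omega, hn]
  congr 2
  apply Nat.sub_eq_of_eq_add
  ring

theorem fibonacci_lacunary_recurrence (N n : ℕ) (hN : 2 ≤ N) (hn : N + 1 ≤ n) :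
    Nat.fib n =
      Nat.fib (N + 1) * Nat.fib (n - N) +
        Nat.fib N ^ 2 *
          (∑ k ∈ Finset.Icc 2 ((n - 1) / N),
            Nat.fib (N - 1) ^ (k - 2) * Nat.fib (n - k * N)) +
        Nat.fib N * Nat.fib (N - 1) ^ ((n - 1) / N - 1) * Nat.fib ((n - 1) % N) := by
  obtain ⟨M, rfl⟩ : ∃ M, N = M + 1 := ⟨N - 1, by omega⟩
  obtain ⟨e, he⟩ : ∃ e, (n - 1) / (M + 1) = e + 1 :=
    ⟨(n - 1) / (M + 1) - 1, by
      have := Nat.div_pos (by omega : M + 1 ≤ n - 1) M.succ_pos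
      omega⟩
  set r := (n - 1) % (M + 1)
  have hn' : n = r + (e + 1) * (M + 1) + 1 := by
    have := Nat.mod_add_div (n - 1) (M + 1)
    rw [he, mul_comm] at this
    omega
  have hfib : fib n =
      fib (r + e * (M + 1)) * fib (M + 1) + fib (r + e * (M + 1) + 1) * fib (M + 2) := by
    rw [← fib_add, hn']
    ring_nf
  rw [he, Nat.add_sub_cancel, Nat.add_sub_cancel, sum_Icc_two_fib_sub_mul M r e n hn', hfib,
    fib_add_mul_succ, show n - (M + 1) = r + e * (M + 1) + 1 by rw [hn']; ring_nf; omega]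
  ring
end
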